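/- For the fermionic-anyon matrices on (ℂ²)^{⊗m}, fix modes i < k < j and real numbers θ, t. Define J³ = (1/2)(ξᵢ†ξᵢ − ξⱼ†ξⱼ), BS_{ij}(θ) = exp(iθ(ξᵢ†ξⱼ + ξⱼ†ξᵢ)), and the twisted beam splitter G^t_{ij}(θ) = exp(it·J³)·BS_{ij}(θ)·exp(−it·J³). Then propagating the intermediate-mode creation operator through the twisted beam splitter shifts its twist by 2φ: G^t_{ij}(θ)·ξ_k† = ξ_k†·G^{t+2φ}_{ij}(θ). -/

import Mathlib

open scoped BigOperators
open Matrix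

/-- `σ = [[0,1],[0,0]]`, the single-mode annihilation matrix. -/
def sigMat : Matrix (Fin 2) (Fin 2) ℂ := !![0, 1; 0, 0]

/-- `D = diag(1, −e^{iφ})`, the Jordan–Wigner string matrix. -/
noncomputable def dMat (φ : ℝ) : Matrix (Fin 2) (Fin 2) ℂ :=
  !![1, 0; 0, -Complex.exp (Complex.I * φ)]

/-- The fermionic-anyon annihilation matrix `ξᵢ = D^{⊗(i−1)} ⊗ σ ⊗ I₂^{⊗(m−i)}` on
`(ℂ²)^{⊗m}`, realized entrywise on tensor indices `Fin m → Fin 2`. -/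
noncomputable def xi (m : ℕ) (φ : ℝ) (i : Fin m) :
    Matrix (Fin m → Fin 2) (Fin m → Fin 2) ℂ :=
  Matrix.of fun r c => ∏ k : Fin m,
    if k < i then dMat φ (r k) (c k)
    else if k = i then sigMat (r k) (c k)
    else if r k = c k then 1 else 0

/-- The anyonic beam splitter `BS_{ij}(θ) = exp(iθ(ξᵢ†ξⱼ + ξⱼ†ξᵢ))`. -/
noncomputable def bs (m : ℕ) (φ : ℝ) (i j : Fin m) (θ : ℝ) :
    Matrix (Fin m → Fin 2) (Fin m → Fin 2) ℂ :=
  NormedSpace.exp ((Complex.I * θ) • ((xi m φ i)ᴴ * xi m φ j + (xi m φ j)ᴴ * xi m φ i))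

/-- `J³ = (1/2)(ξᵢ†ξᵢ − ξⱼ†ξⱼ)`. -/
noncomputable def j3 (m : ℕ) (φ : ℝ) (i j : Fin m) :
    Matrix (Fin m → Fin 2) (Fin m → Fin 2) ℂ :=
  (1 / 2 : ℂ) • ((xi m φ i)ᴴ * xi m φ i - (xi m φ j)ᴴ * xi m φ j)

/-- The twisted beam splitter `G^t_{ij}(θ) = exp(it·J³)·BS_{ij}(θ)·exp(−it·J³)`. -/
noncomputable def twistedBS (m : ℕ) (φ : ℝ) (i j : Fin m) (t θ : ℝ) :
    Matrix (Fin m → Fin 2) (Fin m → Fin 2) ℂ :=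
  NormedSpace.exp ((Complex.I * t) • j3 m φ i j) * bs m φ i j θ *
    NormedSpace.exp ((-(Complex.I * t)) • j3 m φ i j)

/-!
Conjugation by `exp (s • J³)` multiplies the hopping term `ξᵢ†ξⱼ` by `eˢ` and `ξⱼ†ξᵢ` by `e⁻ˢ`,
because `J³` acts on them by `±1/2` from either side. Hence
`G^t_{ij}(θ) = exp (iθ (eⁱᵗ ξᵢ†ξⱼ + e⁻ⁱᵗ ξⱼ†ξᵢ))`. For `i < k < j`, moving `ξₖ†` past `ξᵢ†ξⱼ`
costs the square `e^{2iφ}` of the exchange phase `-e^{iφ}`, and past `ξⱼ†ξᵢ` its conjugate;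
this is exactly the shift `t ↦ t + 2φ` of the generator. These exchange relations are checked
site by site on the Kronecker-product form `D ⊗ ⋯ ⊗ D ⊗ σ ⊗ I ⊗ ⋯ ⊗ I` of the `ξ`'s.
-/

namespace Matrix

theorem conjTranspose_fin_two_of {α : Type*} [Star α] (a b c d : α) :
    !![a, b; c, d]ᴴ = !![star a, star c; star b, star d] := by
  ext i j; fin_cases i <;> fin_cases j <;> rfl

section

variable {n : Type*} [Fintype n] [DecidableEq n]

theorem semiconjBy_exp_right {X A B : Matrix n n ℂ} (h : SemiconjBy X A B) :
    SemiconjBy X (NormedSpace.exp A) (NormedSpace.exp B) :=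
  open scoped Norms.Operator in h.exp_right

theorem exp_smul_one (c : ℂ) :
    NormedSpace.exp (c • (1 : Matrix n n ℂ)) = Complex.exp c • 1 := by
  rw [smul_one_eq_diagonal, exp_diagonal, Pi.exp_def, ← Complex.exp_eq_exp_ℂ,
    smul_one_eq_diagonal]

theorem exp_mul_of_mul_eq_smul {A X : Matrix n n ℂ} {c : ℂ} (h : A * X = c • X) :
    NormedSpace.exp A * X = Complex.exp c • X := by
  have : SemiconjBy X (c • 1) A := by simp [SemiconjBy, h]
  rw [← (semiconjBy_exp_right this).eq, exp_smul_one, mul_smul_comm, mul_one]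

theorem mul_exp_of_mul_eq_smul {A X : Matrix n n ℂ} {c : ℂ} (h : X * A = c • X) :
    X * NormedSpace.exp A = Complex.exp c • X := by
  have : SemiconjBy X A (c • 1) := by simp [SemiconjBy, h]
  rw [(semiconjBy_exp_right this).eq, exp_smul_one, smul_mul_assoc, one_mul]

end

section

variable {ι n R : Type*} [Fintype ι]

def piKron [CommMonoid R] (f : ι → Matrix n n R) : Matrix (ι → n) (ι → n) R :=
  of fun r c => ∏ s, f s (r s) (c s)

theorem piKron_mul [DecidableEq ι] [Fintype n] [CommSemiring R] (f g : ι → Matrix n n R) :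
    piKron f * piKron g = piKron fun s => f s * g s := by
  ext r c
  simp only [piKron, mul_apply, of_apply, Finset.prod_univ_sum, Fintype.piFinset_univ,
    Finset.prod_mul_distrib]

theorem piKron_smul [CommMonoid R] (c : ι → R) (f : ι → Matrix n n R) :
    piKron (fun s => c s • f s) = (∏ s, c s) • piKron f := by
  ext r c
  simp [piKron, Finset.prod_mul_distrib]

theorem piKron_conjTranspose [CommSemiring R] [StarRing R] (f : ι → Matrix n n R) :
    (piKron f)ᴴ = piKron fun s => (f s)ᴴ := by
  ext r c
  simp [piKron]

theorem piKron_eq_zero [CommMonoidWithZero R] {f : ι → Matrix n n R} {a : ι} (h : f a = 0) :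
    piKron f = 0 := by
  ext r c
  exact Finset.prod_eq_zero (Finset.mem_univ a) (by simp [h])

theorem piKron_mul_piKron_eq_smul [DecidableEq ι] [Fintype n] [CommSemiring R]
    {f g : ι → Matrix n n R} (a : ι) (c : R)
    (h : ∀ s, f s * g s = (Pi.mulSingle a c : ι → R) s • (g s * f s)) :
    piKron f * piKron g = c • (piKron g * piKron f) := by
  rw [piKron_mul, piKron_mul, funext h, piKron_smul, Finset.prod_pi_mulSingle']
  simp

variable [LinearOrder ι] [DecidableEq n] [CommSemiring R]

def jordanWigner (P Q : Matrix n n R) (a : ι) : Matrix (ι → n) (ι → n) R :=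
  piKron fun s => if s < a then P else if s = a then Q else 1

theorem jordanWigner_conjTranspose [StarRing R] (P Q : Matrix n n R) (a : ι) :
    (jordanWigner P Q a)ᴴ = jordanWigner Pᴴ Qᴴ a := by
  simp only [jordanWigner, piKron_conjTranspose]
  congr! 2 with s
  split_ifs <;> simp

theorem jordanWigner_mul_jordanWigner [Fintype n] (P Q P' Q' : Matrix n n R) (a : ι) :
    jordanWigner P Q a * jordanWigner P' Q' a = jordanWigner (P * P') (Q * Q') a := by
  simp only [jordanWigner, piKron_mul]
  congr! 2 with s
  split_ifs <;> simp

theorem jordanWigner_zero (P : Matrix n n R) (a : ι) : jordanWigner P 0 a = 0 :=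
  piKron_eq_zero (a := a) (by simp)

theorem jordanWigner_mul_jordanWigner_of_lt [Fintype n] {P Q P' Q' : Matrix n n R} {a b : ι}
    (hab : a < b) (hP : Commute P P') {c : R} (hQ : Q * P' = c • (P' * Q)) :
    jordanWigner P Q a * jordanWigner P' Q' b =
      c • (jordanWigner P' Q' b * jordanWigner P Q a) := by
  refine piKron_mul_piKron_eq_smul a c fun s => ?_
  rcases lt_trichotomy s a with hs | rfl | hs
  · simp [hs, hs.trans hab, hs.ne, hP.eq]
  · simp [hab, hQ]
  · simp only [hs.not_gt, hs.ne', if_false, Pi.mulSingle_eq_of_ne hs.ne', one_smul]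
    split_ifs <;> simp

end

end Matrix

namespace FermionicAnyon

open Matrix ComplexConjugate

noncomputable def exchangePhase (φ : ℝ) : ℂ := -Complex.exp (Complex.I * φ)

variable {m : ℕ} {φ : ℝ}

theorem dMat_eq : dMat φ = !![1, 0; 0, exchangePhase φ] := rfl

theorem conj_exchangePhase : conj (exchangePhase φ) = exchangePhase (-φ) := by
  simp [exchangePhase, ← Complex.exp_conj]

theorem exchangePhase_mul_exchangePhase (φ ψ : ℝ) :
    exchangePhase φ * exchangePhase ψ = Complex.exp (Complex.I * ↑(φ + ψ)) := by
  simp only [exchangePhase, neg_mul_neg, ← Complex.exp_add]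
  push_cast
  ring_nf

theorem exchangePhase_neg_mul_self : exchangePhase (-φ) * exchangePhase φ = 1 := by
  simp [exchangePhase_mul_exchangePhase]

theorem sigMat_mul_self : sigMat * sigMat = 0 := by
  ext i j; fin_cases i <;> fin_cases j <;> simp [sigMat]

theorem sigMat_mul_conjTranspose_mul_self : sigMat * sigMatᴴ * sigMat = sigMat := by
  ext i j; fin_cases i <;> fin_cases j <;> simp [sigMat, conjTranspose_fin_two_of]

theorem dMat_mul_conjTranspose_mul_self : dMat φ * (dMat φ)ᴴ * dMat φ = dMat φ := by
  simp [dMat_eq, conjTranspose_fin_two_of, conj_exchangePhase, mul_assoc,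
    exchangePhase_neg_mul_self]

theorem commute_dMat_conjTranspose : Commute (dMat φ) (dMat φ)ᴴ := by
  simp [Commute, SemiconjBy, dMat_eq, conjTranspose_fin_two_of, mul_comm]

theorem sigMat_mul_dMat_conjTranspose :
    sigMat * (dMat φ)ᴴ = exchangePhase (-φ) • ((dMat φ)ᴴ * sigMat) := by
  ext i j; fin_cases i <;> fin_cases j <;>
    simp [sigMat, dMat_eq, conjTranspose_fin_two_of, conj_exchangePhase]

theorem sigMat_conjTranspose_mul_dMat_conjTranspose :
    sigMatᴴ * (dMat φ)ᴴ = exchangePhase φ • ((dMat φ)ᴴ * sigMatᴴ) := by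
  ext i j; fin_cases i <;> fin_cases j <;>
    simp [sigMat, dMat_eq, conjTranspose_fin_two_of, conj_exchangePhase,
      exchangePhase_mul_exchangePhase]

variable {a b : Fin m}

theorem xi_eq_jordanWigner (a : Fin m) : xi m φ a = jordanWigner (dMat φ) sigMat a := by
  ext r c
  simp only [xi, jordanWigner, piKron, of_apply]
  refine Finset.prod_congr rfl fun s _ => ?_
  split_ifs <;> simp_all [one_apply]

theorem xi_conjTranspose_eq_jordanWigner (a : Fin m) :
    (xi m φ a)ᴴ = jordanWigner (dMat φ)ᴴ sigMatᴴ a := by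
  rw [xi_eq_jordanWigner, jordanWigner_conjTranspose]

theorem xi_mul_self (a : Fin m) : xi m φ a * xi m φ a = 0 := by
  rw [xi_eq_jordanWigner, jordanWigner_mul_jordanWigner, sigMat_mul_self, jordanWigner_zero]

theorem xi_conjTranspose_mul_self (a : Fin m) : (xi m φ a)ᴴ * (xi m φ a)ᴴ = 0 := by
  rw [← conjTranspose_mul, xi_mul_self, conjTranspose_zero]

theorem xi_mul_conjTranspose_mul_self (a : Fin m) :
    xi m φ a * (xi m φ a)ᴴ * xi m φ a = xi m φ a := by
  rw [xi_conjTranspose_eq_jordanWigner, xi_eq_jordanWigner, jordanWigner_mul_jordanWigner,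
    jordanWigner_mul_jordanWigner, dMat_mul_conjTranspose_mul_self,
    sigMat_mul_conjTranspose_mul_self]

theorem xi_conjTranspose_mul_self_mul_conjTranspose (a : Fin m) :
    (xi m φ a)ᴴ * xi m φ a * (xi m φ a)ᴴ = (xi m φ a)ᴴ := by
  simpa [conjTranspose_mul, mul_assoc] using
    congrArg conjTranspose (xi_mul_conjTranspose_mul_self (φ := φ) a)

theorem xi_mul_xi_conjTranspose_of_lt (hab : a < b) :
    xi m φ a * (xi m φ b)ᴴ = exchangePhase (-φ) • ((xi m φ b)ᴴ * xi m φ a) := by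
  rw [xi_conjTranspose_eq_jordanWigner, xi_eq_jordanWigner]
  exact jordanWigner_mul_jordanWigner_of_lt hab commute_dMat_conjTranspose
    sigMat_mul_dMat_conjTranspose

theorem xi_mul_xi_conjTranspose_of_gt (hab : a < b) :
    xi m φ b * (xi m φ a)ᴴ = exchangePhase φ • ((xi m φ a)ᴴ * xi m φ b) := by
  simpa [conjTranspose_mul, conj_exchangePhase] using
    congrArg conjTranspose (xi_mul_xi_conjTranspose_of_lt (φ := φ) hab)

theorem exists_xi_mul_xi_conjTranspose_eq_smul (hab : a ≠ b) :
    ∃ c : ℂ, xi m φ b * (xi m φ a)ᴴ = c • ((xi m φ a)ᴴ * xi m φ b) := by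
  rcases hab.lt_or_gt with h | h
  · exact ⟨_, xi_mul_xi_conjTranspose_of_gt h⟩
  · exact ⟨_, xi_mul_xi_conjTranspose_of_lt h⟩

theorem xi_conjTranspose_mul_xi_conjTranspose_of_lt (hab : a < b) :
    (xi m φ a)ᴴ * (xi m φ b)ᴴ = exchangePhase φ • ((xi m φ b)ᴴ * (xi m φ a)ᴴ) := by
  simp only [xi_conjTranspose_eq_jordanWigner]
  exact jordanWigner_mul_jordanWigner_of_lt hab (Commute.refl _)
    sigMat_conjTranspose_mul_dMat_conjTranspose

theorem xi_conjTranspose_mul_xi_conjTranspose_of_gt (hab : a < b) :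
    (xi m φ b)ᴴ * (xi m φ a)ᴴ = exchangePhase (-φ) • ((xi m φ a)ᴴ * (xi m φ b)ᴴ) := by
  rw [xi_conjTranspose_mul_xi_conjTranspose_of_lt hab, smul_smul, exchangePhase_neg_mul_self,
    one_smul]

noncomputable def hop (m : ℕ) (φ : ℝ) (i j : Fin m) :
    Matrix (Fin m → Fin 2) (Fin m → Fin 2) ℂ :=
  (xi m φ i)ᴴ * xi m φ j

variable {i j k : Fin m}

theorem hop_self_mul_hop : hop m φ i i * hop m φ i j = hop m φ i j := by
  rw [hop, hop, ← mul_assoc, xi_conjTranspose_mul_self_mul_conjTranspose]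

theorem hop_mul_hop_self : hop m φ i j * hop m φ j j = hop m φ i j := by
  rw [hop, hop, mul_assoc, ← mul_assoc (xi m φ j), xi_mul_conjTranspose_mul_self]

theorem hop_mul_hop_self_of_ne (hij : i ≠ j) : hop m φ i j * hop m φ i i = 0 := by
  obtain ⟨c, hc⟩ := exists_xi_mul_xi_conjTranspose_eq_smul (φ := φ) hij
  calc hop m φ i j * hop m φ i i = (xi m φ i)ᴴ * (xi m φ j * (xi m φ i)ᴴ) * xi m φ i := by
        simp only [hop, mul_assoc]
    _ = c • ((xi m φ i)ᴴ * (xi m φ i)ᴴ * (xi m φ j * xi m φ i)) := by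
        rw [hc, mul_smul_comm, smul_mul_assoc]; simp only [mul_assoc]
    _ = 0 := by rw [xi_conjTranspose_mul_self, zero_mul, smul_zero]

theorem hop_self_mul_hop_of_ne (hij : i ≠ j) : hop m φ j j * hop m φ i j = 0 := by
  obtain ⟨c, hc⟩ := exists_xi_mul_xi_conjTranspose_eq_smul (φ := φ) hij
  calc hop m φ j j * hop m φ i j = (xi m φ j)ᴴ * (xi m φ j * (xi m φ i)ᴴ) * xi m φ j := by
        simp only [hop, mul_assoc]
    _ = c • ((xi m φ j)ᴴ * (xi m φ i)ᴴ * (xi m φ j * xi m φ j)) := by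
        rw [hc, mul_smul_comm, smul_mul_assoc]; simp only [mul_assoc]
    _ = 0 := by rw [xi_mul_self, mul_zero, smul_zero]

theorem j3_eq_hop : j3 m φ i j = (1 / 2 : ℂ) • (hop m φ i i - hop m φ j j) := rfl

theorem j3_swap : j3 m φ j i = -j3 m φ i j := by
  rw [j3, j3, ← smul_neg, neg_sub]

theorem j3_mul_hop (hij : i ≠ j) : j3 m φ i j * hop m φ i j = (1 / 2 : ℂ) • hop m φ i j := by
  rw [j3_eq_hop, smul_mul_assoc, sub_mul, hop_self_mul_hop, hop_self_mul_hop_of_ne hij, sub_zero]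

theorem hop_mul_j3 (hij : i ≠ j) : hop m φ i j * j3 m φ i j = (-1 / 2 : ℂ) • hop m φ i j := by
  rw [j3_eq_hop, mul_smul_comm, mul_sub, hop_mul_hop_self_of_ne hij, hop_mul_hop_self, zero_sub,
    smul_neg, ← neg_smul, neg_div]

theorem exp_j3_mul_hop_mul_exp_neg_j3 (hij : i ≠ j) (s : ℂ) :
    NormedSpace.exp (s • j3 m φ i j) * hop m φ i j * NormedSpace.exp ((-s) • j3 m φ i j) =
      Complex.exp s • hop m φ i j := by
  have hleft : (s • j3 m φ i j) * hop m φ i j = (s / 2) • hop m φ i j := by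
    rw [smul_mul_assoc, j3_mul_hop hij, smul_smul]; ring_nf
  have hright : hop m φ i j * ((-s) • j3 m φ i j) = (s / 2) • hop m φ i j := by
    rw [mul_smul_comm, hop_mul_j3 hij, smul_smul]; ring_nf
  rw [exp_mul_of_mul_eq_smul hleft, smul_mul_assoc, mul_exp_of_mul_eq_smul hright, smul_smul,
    ← Complex.exp_add, add_halves]

theorem exp_j3_mul_hop_swap_mul_exp_neg_j3 (hij : i ≠ j) (s : ℂ) :
    NormedSpace.exp (s • j3 m φ i j) * hop m φ j i * NormedSpace.exp ((-s) • j3 m φ i j) =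
      Complex.exp (-s) • hop m φ j i := by
  have h := exp_j3_mul_hop_mul_exp_neg_j3 (φ := φ) hij.symm (-s)
  rwa [j3_swap, neg_smul_neg, neg_neg, smul_neg, ← neg_smul] at h

noncomputable def twistedGenerator (m : ℕ) (φ : ℝ) (i j : Fin m) (t θ : ℝ) :
    Matrix (Fin m → Fin 2) (Fin m → Fin 2) ℂ :=
  (Complex.I * θ) • (Complex.exp (Complex.I * t) • hop m φ i j +
    Complex.exp (-(Complex.I * t)) • hop m φ j i)

theorem twistedBS_eq_exp_twistedGenerator (hij : i ≠ j) (t θ : ℝ) :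
    twistedBS m φ i j t θ = NormedSpace.exp (twistedGenerator m φ i j t θ) := by
  set U := NormedSpace.exp ((Complex.I * t) • j3 m φ i j)
  have hU : NormedSpace.exp ((-(Complex.I * t)) • j3 m φ i j) = U⁻¹ := by
    rw [neg_smul, Matrix.exp_neg]
  have hconj : U * ((Complex.I * θ) • (hop m φ i j + hop m φ j i)) * U⁻¹ =
      twistedGenerator m φ i j t θ := by
    rw [← hU, mul_smul_comm, smul_mul_assoc, mul_add, add_mul,
      exp_j3_mul_hop_mul_exp_neg_j3 hij, exp_j3_mul_hop_swap_mul_exp_neg_j3 hij, twistedGenerator]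
  rw [twistedBS, bs, hU, ← hconj, Matrix.exp_conj _ _ (Matrix.isUnit_exp _)]
  rfl

theorem hop_mul_xi_conjTranspose (hik : i < k) (hkj : k < j) :
    hop m φ i j * (xi m φ k)ᴴ =
      (exchangePhase φ * exchangePhase φ) • ((xi m φ k)ᴴ * hop m φ i j) := by
  calc hop m φ i j * (xi m φ k)ᴴ = (xi m φ i)ᴴ * (xi m φ j * (xi m φ k)ᴴ) := mul_assoc _ _ _
    _ = exchangePhase φ • ((xi m φ i)ᴴ * (xi m φ k)ᴴ * xi m φ j) := by
        rw [xi_mul_xi_conjTranspose_of_gt hkj, mul_smul_comm, mul_assoc]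
    _ = _ := by
        rw [xi_conjTranspose_mul_xi_conjTranspose_of_lt hik, smul_mul_assoc, smul_smul, mul_assoc,
          hop]

theorem hop_swap_mul_xi_conjTranspose (hik : i < k) (hkj : k < j) :
    hop m φ j i * (xi m φ k)ᴴ =
      (exchangePhase (-φ) * exchangePhase (-φ)) • ((xi m φ k)ᴴ * hop m φ j i) := by
  calc hop m φ j i * (xi m φ k)ᴴ = (xi m φ j)ᴴ * (xi m φ i * (xi m φ k)ᴴ) := mul_assoc _ _ _
    _ = exchangePhase (-φ) • ((xi m φ j)ᴴ * (xi m φ k)ᴴ * xi m φ i) := by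
        rw [xi_mul_xi_conjTranspose_of_lt hik, mul_smul_comm, mul_assoc]
    _ = _ := by
        rw [xi_conjTranspose_mul_xi_conjTranspose_of_gt hkj, smul_mul_assoc, smul_smul, mul_assoc,
          hop]

theorem semiconjBy_xi_conjTranspose_twistedGenerator (hik : i < k) (hkj : k < j) (t θ : ℝ) :
    SemiconjBy (xi m φ k)ᴴ (twistedGenerator m φ i j (t + 2 * φ) θ)
      (twistedGenerator m φ i j t θ) := by
  have hphase : Complex.exp (Complex.I * t) * (exchangePhase φ * exchangePhase φ) =
      Complex.exp (Complex.I * ↑(t + 2 * φ)) := by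
    rw [exchangePhase_mul_exchangePhase, ← Complex.exp_add]; push_cast; ring_nf
  have hphase' : Complex.exp (-(Complex.I * t)) * (exchangePhase (-φ) * exchangePhase (-φ)) =
      Complex.exp (-(Complex.I * ↑(t + 2 * φ))) := by
    rw [exchangePhase_mul_exchangePhase, ← Complex.exp_add]; push_cast; ring_nf
  simp only [SemiconjBy, twistedGenerator, smul_mul_assoc, add_mul,
    hop_mul_xi_conjTranspose hik hkj, hop_swap_mul_xi_conjTranspose hik hkj, smul_smul, hphase,
    hphase', mul_smul_comm, mul_add]

end FermionicAnyon

/-- **Propagation of an intermediate-mode creation operator through a twisted beam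
splitter.** For modes `i < k < j` and reals `θ, t`:
`G^t_{ij}(θ)·ξ_k† = ξ_k†·G^{t+2φ}_{ij}(θ)`. -/
theorem fermionic_anyon_intermediate_mode_propagation (m : ℕ) (φ : ℝ) (i k j : Fin m)
    (hik : i < k) (hkj : k < j) (θ t : ℝ) :
    twistedBS m φ i j t θ * (xi m φ k)ᴴ = (xi m φ k)ᴴ * twistedBS m φ i j (t + 2 * φ) θ := by
  have hij : i ≠ j := (hik.trans hkj).ne
  rw [FermionicAnyon.twistedBS_eq_exp_twistedGenerator hij,
    FermionicAnyon.twistedBS_eq_exp_twistedGenerator hij]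
  exact (semiconjBy_exp_right
    (FermionicAnyon.semiconjBy_xi_conjTranspose_twistedGenerator hik hkj t θ)).eq.symm
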